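/- arXiv:0810.0768 — 4 statements merged into one kernel-verified Lean document; each statement's English description precedes it below -/
import Mathlib

section
/- Let a_0 = 3, b_0 = 4, c_0 = 7, a_{i+1} = c_i, b_{i+1} = c_i + 1, c_{i+1} = 2*c_i + 1, and set T = range(a), 𝒜 = range(b), S = {(c_i, a_i, b_i) : i} ∪ {(c_i, b_i, a_i) : i}, A = {(b_i, a_i) : i}, N = {c_i : i}, P = {(x,y) : x,y ∈ T ∪ 𝒜, x < y}. Then this structure satisfies all axioms of TAS_3: (E1) T nonempty; (E2) for every x ∈ T there is a unique y with A(y,x); (E3) for all x,y with A(y,x) there is a unique z with S(z,x,y); (E4) N nonempty; (E5.1) for every x ∈ N there is y ∈ N with P(x,y); (E6.1) for every x in the domain there is y with P(x,y); (R1.1) A(y,x) implies x ∈ T and P(x,y); (R2.1) S(z,x,y) implies z ∈ T, (A(x,y) or A(y,x)), S(z,y,x), P(x,z), and P(y,z); (R3.1) P is asymmetric; (R4.1) P is transitive. -/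
/-!
Since `b i = a i + 1` and `c` is positive, every `S`-triple `(c i, a i, b i)` has its top
element `c i = a (i + 1)` strictly above `a i < b i`; so `P`, the restriction of `<` to the domain,
orders each triple correctly, and is a strict order for free. Uniqueness in (E2) and (E3) is
injectivity of the strictly increasing sequence `a`, plus the fact that `a i = b j` and
`b i = a j` cannot both hold when `a < b` pointwise.
-/

open Set Function

def PrecOn {α : Type*} [LT α] (D : Set α) (x y : α) : Prop := x ∈ D ∧ y ∈ D ∧ x < y

section PrecOn

variable {α : Type*} [Preorder α] {D : Set α} {x y z : α}

theorem PrecOn.not_precOn (h : PrecOn D x y) : ¬ PrecOn D y x :=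
  fun h' => lt_asymm h.2.2 h'.2.2

theorem PrecOn.trans (hxy : PrecOn D x y) (hyz : PrecOn D y z) : PrecOn D x z :=
  ⟨hxy.1, hyz.2.1, hxy.2.2.trans hyz.2.2⟩

end PrecOn

namespace ModelC

variable {a b c : ℕ → ℕ} {x y z : ℕ}

theorem b_eq_a_add_one (ha : ∀ i, a (i + 1) = c i) (hb : ∀ i, b (i + 1) = c i + 1)
    (h0 : b 0 = a 0 + 1) : ∀ i, b i = a i + 1
  | 0 => h0
  | i + 1 => by rw [ha, hb]

theorem b_lt_c (hb : ∀ i, b (i + 1) = c i + 1) (hc : ∀ i, c (i + 1) = 2 * c i + 1)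
    (h0 : b 0 < c 0) : ∀ i, b i < c i
  | 0 => h0
  | i + 1 => by
    have := b_lt_c hb hc h0 i
    rw [hb, hc]
    omega

def IsA (a b : ℕ → ℕ) (y x : ℕ) : Prop := ∃ i, y = b i ∧ x = a i

def IsS (a b c : ℕ → ℕ) (z x y : ℕ) : Prop :=
  (∃ i, z = c i ∧ x = a i ∧ y = b i) ∨ (∃ i, z = c i ∧ x = b i ∧ y = a i)

theorem existsUnique_isA (ha : Injective a) (hx : x ∈ range a) : ∃! y, IsA a b y x := by
  obtain ⟨i, rfl⟩ := hx
  refine ⟨b i, ⟨i, rfl, rfl⟩, ?_⟩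
  rintro _ ⟨j, rfl, hj⟩
  rw [ha hj]

theorem existsUnique_isS (ha : Injective a) (hab : ∀ i, a i < b i) (h : IsA a b y x) :
    ∃! z, IsS a b c z x y := by
  obtain ⟨i, rfl, rfl⟩ := h
  refine ⟨c i, .inl ⟨i, rfl, rfl, rfl⟩, ?_⟩
  rintro _ (⟨j, rfl, hj, -⟩ | ⟨j, rfl, hij, hji⟩)
  · rw [ha hj]
  · have := hab i
    have := hab j
    omega

theorem IsS.symm (h : IsS a b c z x y) : IsS a b c z y x := by
  rcases h with ⟨i, hz, hx, hy⟩ | ⟨i, hz, hx, hy⟩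
  exacts [.inr ⟨i, hz, hy, hx⟩, .inl ⟨i, hz, hy, hx⟩]

theorem IsS.isA_or_isA (h : IsS a b c z x y) : IsA a b x y ∨ IsA a b y x := by
  rcases h with ⟨i, -, hx, hy⟩ | ⟨i, -, hx, hy⟩
  exacts [.inr ⟨i, hy, hx⟩, .inl ⟨i, hx, hy⟩]

theorem IsS.mem_range (ha : ∀ i, a (i + 1) = c i) (h : IsS a b c z x y) : z ∈ range a := by
  rcases h with ⟨i, rfl, -⟩ | ⟨i, rfl, -⟩ <;> exact ⟨i + 1, ha i⟩

theorem IsS.precOn (ha : ∀ i, a (i + 1) = c i) (hac : ∀ i, a i < c i) (hbc : ∀ i, b i < c i)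
    (h : IsS a b c z x y) : PrecOn (range a ∪ range b) x z := by
  refine ⟨?_, .inl (h.mem_range ha), ?_⟩ <;>
    rcases h with ⟨i, rfl, rfl, -⟩ | ⟨i, rfl, rfl, -⟩
  exacts [.inl ⟨i, rfl⟩, .inr ⟨i, rfl⟩, hac i, hbc i]

end ModelC

open ModelC in
theorem modelC_TAS3
    (a b c : ℕ → ℕ)
    (ha0 : a 0 = 3) (hb0 : b 0 = 4) (hc0 : c 0 = 7)
    (ha : ∀ i, a (i + 1) = c i)
    (hb : ∀ i, b (i + 1) = c i + 1)
    (hc : ∀ i, c (i + 1) = 2 * c i + 1)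
    (T 𝒜 N : Set ℕ) (A : ℕ → ℕ → Prop) (S : ℕ → ℕ → ℕ → Prop) (P : ℕ → ℕ → Prop)
    (hT : T = Set.range a) (h𝒜 : 𝒜 = Set.range b) (hN : N = Set.range c)
    (hA : ∀ y x, A y x ↔ ∃ i, y = b i ∧ x = a i)
    (hS : ∀ z x y, S z x y ↔ (∃ i, z = c i ∧ x = a i ∧ y = b i) ∨
        (∃ i, z = c i ∧ x = b i ∧ y = a i))
    (hP : ∀ x y, P x y ↔ x ∈ T ∪ 𝒜 ∧ y ∈ T ∪ 𝒜 ∧ x < y) :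
    (∃ x, x ∈ T) ∧
    (∀ x, x ∈ T → ∃! y, A y x) ∧
    (∀ x y, A y x → ∃! z, S z x y) ∧
    (∃ x, x ∈ N) ∧
    (∀ x, x ∈ N → ∃ y, y ∈ N ∧ P x y) ∧
    (∀ x, x ∈ T ∪ 𝒜 → ∃ y, P x y) ∧
    (∀ x y, A y x → x ∈ T ∧ P x y) ∧
    (∀ x y z, S z x y → z ∈ T ∧ (A x y ∨ A y x) ∧ S z y x ∧ P x z ∧ P y z) ∧
    (∀ x y, P x y → ¬ P y x) ∧
    (∀ x y z, P x y → P y z → P x z) := by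
  have hba := b_eq_a_add_one ha hb (by omega)
  have hbc := b_lt_c hb hc (by omega)
  have hab i : a i < b i := by rw [hba]; exact Nat.lt_add_one _
  have hac i : a i < c i := (hab i).trans (hbc i)
  have hinj : Injective a := (strictMono_nat_of_lt_succ fun i => ha i ▸ hac i).injective
  subst hT h𝒜 hN
  obtain rfl : A = IsA a b := funext₂ fun y x => propext (hA y x)
  obtain rfl : S = IsS a b c := funext₃ fun z x y => propext (hS z x y)
  obtain rfl : P = PrecOn (range a ∪ range b) := funext₂ fun x y => propext (hP x y)
  have hprec i : PrecOn (range a ∪ range b) (a i) (b i) := ⟨.inl ⟨i, rfl⟩, .inr ⟨i, rfl⟩, hab i⟩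
  refine ⟨⟨a 0, 0, rfl⟩, fun x => existsUnique_isA hinj, fun x y => existsUnique_isS hinj hab,
    ⟨c 0, 0, rfl⟩, ?_, ?_, fun x y ⟨i, hy, hx⟩ => ⟨⟨i, hx.symm⟩, hx ▸ hy ▸ hprec i⟩,
    fun x y z h => ⟨h.mem_range ha, h.isA_or_isA, h.symm, h.precOn ha hac hbc,
      h.symm.precOn ha hac hbc⟩, fun x y => PrecOn.not_precOn, fun x y z => PrecOn.trans⟩
  · rintro _ ⟨i, rfl⟩
    exact ⟨c (i + 1), ⟨i + 1, rfl⟩, .inl ⟨i + 1, ha i⟩, .inl ⟨i + 2, ha (i + 1)⟩,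
      by rw [hc]; omega⟩
  · rintro _ (⟨i, rfl⟩ | ⟨i, rfl⟩)
    exacts [⟨b i, hprec i⟩, ⟨c i, .inr ⟨i, rfl⟩, .inl ⟨i + 1, ha i⟩, hbc i⟩]
end

section
/- Fix k ∈ ℕ with k ≥ 2. Let T = {0,1,...,k}, 𝒜 = {k+1}, A = {(k+1, i) : 0 ≤ i ≤ k}, S = {(i+1, i, k+1) : 0 ≤ i ≤ k-1} ∪ {(0, k, k+1)}, N = {1,2}. Then this structure satisfies all axioms of TAS_1 and TAS_2: (E1) T nonempty; (E2) for each x ∈ T there is a unique y with A(y,x); (E3) for all x,y with A(y,x) there is a unique z with S(z,x,y); (E4) N nonempty; (E5) every x ∈ N has y ∈ N with y ≠ x; (R1) A(y,x) implies x ∈ T and ¬A(x,y); (R2) S(z,x,y) implies z ∈ T, (A(x,y) ∨ A(y,x)), and ¬(S(x,z,y) ∨ S(y,x,z)). -/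
/-! The relation `S` is the cyclic successor on `T = {0, …, k}` with the antithesis `k + 1` as
its third argument: `S z x (k + 1)` holds exactly when `z = (x + 1) % (k + 1)`. This makes `z`
unique, and neither `S x z y` (it would force `x = (x + 2) % (k + 1)`, impossible once `k + 1 ≥ 3`)
nor `S y x z` (it would force `z = k + 1`) can hold. -/

lemma Nat.add_two_mod_ne_self {n x : ℕ} (hn : 3 ≤ n) (hx : x < n) : (x + 2) % n ≠ x := by
  rcases lt_or_ge (x + 2) n with h | h
  · rw [Nat.mod_eq_of_lt h]
    omega
  · rw [Nat.mod_eq_sub_mod h, Nat.mod_eq_of_lt (by omega)]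
    omega

lemma modelD_S_iff {k : ℕ} (hk : 1 ≤ k) {S : ℕ → ℕ → ℕ → Prop}
    (hS : ∀ z x y, S z x y ↔ (∃ i, i ≤ k - 1 ∧ z = i + 1 ∧ x = i ∧ y = k + 1) ∨
        (z = 0 ∧ x = k ∧ y = k + 1)) (z x y : ℕ) :
    S z x y ↔ y = k + 1 ∧ x ≤ k ∧ z = (x + 1) % (k + 1) := by
  rw [hS]
  constructor
  · rintro (⟨i, hi, rfl, rfl, rfl⟩ | ⟨rfl, rfl, rfl⟩)
    · exact ⟨rfl, by omega, (Nat.mod_eq_of_lt (by omega)).symm⟩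
    · exact ⟨rfl, le_rfl, (Nat.mod_self _).symm⟩
  · rintro ⟨rfl, hx, rfl⟩
    rcases hx.lt_or_eq with hx | rfl
    · exact Or.inl ⟨x, by omega, Nat.mod_eq_of_lt (by omega), rfl, rfl⟩
    · exact Or.inr ⟨Nat.mod_self _, rfl, rfl⟩

theorem modelD_TAS1_TAS2 (k : ℕ) (hk : 2 ≤ k)
    (T N : Set ℕ) (A : ℕ → ℕ → Prop) (S : ℕ → ℕ → ℕ → Prop)
    (hT : T = {i : ℕ | i ≤ k}) (hN : N = {1, 2})
    (hA : ∀ y x, A y x ↔ y = k + 1 ∧ x ≤ k)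
    (hS : ∀ z x y, S z x y ↔ (∃ i, i ≤ k - 1 ∧ z = i + 1 ∧ x = i ∧ y = k + 1) ∨
        (z = 0 ∧ x = k ∧ y = k + 1)) :
    (∃ x, x ∈ T) ∧
    (∀ x, x ∈ T → ∃! y, A y x) ∧
    (∀ x y, A y x → ∃! z, S z x y) ∧
    (∃ x, x ∈ N) ∧
    (∀ x, x ∈ N → ∃ y, y ∈ N ∧ y ≠ x) ∧
    (∀ x y, A y x → x ∈ T ∧ ¬ A x y) ∧
    (∀ x y z, S z x y → z ∈ T ∧ (A x y ∨ A y x) ∧ ¬ (S x z y ∨ S y x z)) := by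
  subst hT hN
  have hS' := modelD_S_iff (by omega) hS
  have hmod (x : ℕ) : (x + 1) % (k + 1) ≤ k := Nat.lt_succ_iff.mp (Nat.mod_lt _ k.succ_pos)
  refine ⟨⟨0, Nat.zero_le k⟩, ?_, ?_, ⟨1, by simp⟩, ?_, ?_, ?_⟩
  · exact fun x hx ↦ ⟨k + 1, (hA _ _).2 ⟨rfl, hx⟩, fun y hy ↦ ((hA _ _).1 hy).1⟩
  · intro x y hyx
    obtain ⟨rfl, hx⟩ := (hA _ _).1 hyx
    exact ⟨_, (hS' _ _ _).2 ⟨rfl, hx, rfl⟩, fun z hz ↦ ((hS' _ _ _).1 hz).2.2⟩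
  · rintro x (rfl | rfl)
    exacts [⟨2, by simp⟩, ⟨1, by simp⟩]
  · intro x y hyx
    obtain ⟨rfl, hx⟩ := (hA _ _).1 hyx
    exact ⟨hx, fun h ↦ by have := ((hA _ _).1 h).2; omega⟩
  · intro x y z hz
    obtain ⟨rfl, hx, rfl⟩ := (hS' _ _ _).1 hz
    refine ⟨hmod x, Or.inr ((hA _ _).2 ⟨rfl, hx⟩), ?_⟩
    rintro (h | h)
    · have hcycle := ((hS' _ _ _).1 h).2.2
      rw [Nat.mod_add_mod] at hcycle
      exact Nat.add_two_mod_ne_self (by omega) (by omega) hcycle.symm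
    · have := (hS' _ _ _).1 h
      have := hmod x
      omega
end

section
/- In Model D with parameter k ≥ 2, the axiom E3 holds with explicit witnesses: for the pair A(k+1, k) the unique z with S(z, k, k+1) is z = 0, and for each i with 0 ≤ i ≤ k-1 and A(k+1, i) the unique z with S(z, i, k+1) is z = i+1. -/
theorem modelD_E3_witnesses_general (k : ℕ) (hk : 2 ≤ k)
    (A : ℕ → ℕ → Prop) (S : ℕ → ℕ → ℕ → Prop)
    (hS : ∀ z x y, S z x y ↔ (∃ i, i ≤ k - 1 ∧ z = i + 1 ∧ x = i ∧ y = k + 1) ∨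
        (z = 0 ∧ x = k ∧ y = k + 1)) :
    (A (k + 1) k → ∀ z, S z k (k + 1) ↔ z = 0) ∧
    (∀ i, i ≤ k - 1 → A (k + 1) i → ∀ z, S z i (k + 1) ↔ z = i + 1) := by
  have fibre : ∀ z x, S z x (k + 1) ↔ (x ≤ k - 1 ∧ z = x + 1) ∨ (z = 0 ∧ x = k) := fun z x => by
    simp only [hS, and_true]
    refine or_congr_left ⟨?_, ?_⟩
    · rintro ⟨i, hi, rfl, rfl⟩
      exact ⟨hi, rfl⟩
    · rintro ⟨hx, rfl⟩
      exact ⟨x, hx, rfl, rfl⟩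
  -- Once `k ≥ 1`, `x = k` violates `x ≤ k - 1`, so the two families of triples are disjoint.
  refine ⟨fun _ z => ?_, fun i hi _ z => ?_⟩ <;> rw [fibre] <;> omega

theorem modelD_E3_witnesses (k : ℕ) (hk : 2 ≤ k)
    (A : ℕ → ℕ → Prop) (S : ℕ → ℕ → ℕ → Prop)
    (hA : ∀ y x, A y x ↔ y = k + 1 ∧ x ≤ k)
    (hS : ∀ z x y, S z x y ↔ (∃ i, i ≤ k - 1 ∧ z = i + 1 ∧ x = i ∧ y = k + 1) ∨
        (z = 0 ∧ x = k ∧ y = k + 1)) :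
    (A (k + 1) k → ∀ z, S z k (k + 1) ↔ z = 0) ∧
    (∀ i, i ≤ k - 1 → A (k + 1) i → ∀ z, S z i (k + 1) ↔ z = i + 1) :=
  modelD_E3_witnesses_general k hk A S hS
end

section
/- Any structure satisfying TAS_3 has at least two antitheses: if T, A, S, P on a type satisfy E2 (every x ∈ T has a unique y with A(y,x)), E3 (each A(y,x) yields a unique z with S(z,x,y)), R1.1 (A(y,x) → x ∈ T ∧ P(x,y)), R2.1 (S(z,x,y) → z ∈ T ∧ (A(x,y) ∨ A(y,x)) ∧ S(z,y,x) ∧ P(x,z) ∧ P(y,z)), R3.1 (P asymmetric), R4.1 (P transitive), and E1 (T nonempty), then the set 𝒜 = {y : ∃ x ∈ T, A(y,x)} contains at least two distinct elements. -/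
theorem TAS3_two_antitheses_general {α : Type*}
    (T : Set α) (A : α → α → Prop) (S : α → α → α → Prop) (P : α → α → Prop)
    (hE1 : T.Nonempty)
    (hE2 : ∀ x ∈ T, ∃! y, A y x)
    (hE3 : ∀ x y, A y x → ∃! z, S z x y)
    (hR11 : ∀ x y, A y x → x ∈ T ∧ P x y)
    (hR21 : ∀ x y z, S z x y → z ∈ T ∧ (A x y ∨ A y x) ∧ S z y x ∧ P x z ∧ P y z)
    (hR31 : ∀ x y, P x y → ¬ P y x) :
    ∃ b c, b ∈ {y | ∃ x ∈ T, A y x} ∧ c ∈ {y | ∃ x ∈ T, A y x} ∧ b ≠ c := by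
  obtain ⟨x, hx⟩ := hE1
  obtain ⟨b, hAbx, -⟩ := hE2 x hx
  obtain ⟨z, hSzxb, -⟩ := hE3 x b hAbx
  obtain ⟨hz, -, -, -, hPbz⟩ := hR21 x b z hSzxb
  obtain ⟨c, hAcz, -⟩ := hE2 z hz
  refine ⟨b, c, ⟨x, hx, hAbx⟩, ⟨z, hz, hAcz⟩, ?_⟩
  -- `c = b` would give `P z b` alongside `P b z`.
  rintro rfl
  exact hR31 b z hPbz (hR11 z b hAcz).2

theorem TAS3_two_antitheses {α : Type*}
    (T : Set α) (A : α → α → Prop) (S : α → α → α → Prop) (P : α → α → Prop)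
    (hE1 : T.Nonempty)
    (hE2 : ∀ x ∈ T, ∃! y, A y x)
    (hE3 : ∀ x y, A y x → ∃! z, S z x y)
    (hR11 : ∀ x y, A y x → x ∈ T ∧ P x y)
    (hR21 : ∀ x y z, S z x y → z ∈ T ∧ (A x y ∨ A y x) ∧ S z y x ∧ P x z ∧ P y z)
    (hR31 : ∀ x y, P x y → ¬ P y x)
    (hR41 : ∀ x y z, P x y → P y z → P x z) :
    ∃ b c, b ∈ {y | ∃ x ∈ T, A y x} ∧ c ∈ {y | ∃ x ∈ T, A y x} ∧ b ≠ c :=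
  TAS3_two_antitheses_general T A S P hE1 hE2 hE3 hR11 hR21 hR31
end
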